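/- arXiv:1903.00939 — 4 statements merged into one kernel-verified Lean document; each statement's English description precedes it below -/
import Mathlib

section
/- Consider the Bernoulli race algorithm with positive constants c_1,...,c_N and probabilities b_1,...,b_N in [0,1] with at least one b_i c_i > 0: repeatedly sample an index I from the multinomial distribution P(I=i) = c_i / (sum_k c_k), then sample Z ~ Bernoulli(b_I), returning I when Z = 1. The returned index has distribution p(i) = c_i b_i / (sum_{k=1}^N c_k b_k). -/
/-!
Conditioning on acceptance divides each joint weight `(c i / ∑ c) * b i` by their total
`(∑ c b) / ∑ c`; the normalisation `∑ c` of the proposal cancels.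
-/

open MeasureTheory ProbabilityTheory

theorem ProbabilityTheory.cond_apply_fiber_eq_div_sum {Ω ι : Type*} [MeasurableSpace Ω]
    [MeasurableSpace ι] [MeasurableSingletonClass ι] [Fintype ι] {μ : Measure Ω} {I : Ω → ι}
    (hI : Measurable I) (A : Set Ω) (i : ι) :
    μ[|A] {ω | I ω = i} = μ {ω | I ω = i ∧ ω ∈ A} / ∑ j, μ {ω | I ω = j ∧ ω ∈ A} := by
  have hfiber : ∀ j, μ {ω | I ω = j ∧ ω ∈ A} = μ.restrict A (I ⁻¹' {j}) := fun j =>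
    (Measure.restrict_apply (hI (measurableSet_singleton j))).symm
  have htotal : ∑ j, μ {ω | I ω = j ∧ ω ∈ A} = μ A := by
    simp_rw [hfiber]
    rw [sum_measure_preimage_singleton _ fun j _ => hI (measurableSet_singleton j)]
    simp
  rw [cond_apply' (t := {ω | I ω = i}) (hI (measurableSet_singleton i)), htotal,
    ENNReal.div_eq_inv_mul, Set.inter_comm]
  rfl

theorem ENNReal.ofReal_div_sum_ofReal {ι : Type*} [Fintype ι] {x : ι → ℝ} (hx : ∀ j, 0 ≤ x j)
    (i : ι) :
    ENNReal.ofReal (x i) / ∑ j, ENNReal.ofReal (x j) = ENNReal.ofReal (x i / ∑ j, x j) := by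
  rw [← ENNReal.ofReal_sum_of_nonneg fun j _ => hx j]
  -- if all weights vanish, both sides are `0` through the convention `0 / 0 = 0`
  rcases (Finset.sum_nonneg fun j _ => hx j : 0 ≤ ∑ j, x j).eq_or_lt with hzero | hpos
  · have hxi : x i = 0 := (Finset.sum_eq_zero_iff_of_nonneg fun j _ => hx j).1 hzero.symm i
      (Finset.mem_univ i)
    simp [hxi]
  · exact (ENNReal.ofReal_div_of_pos hpos).symm

theorem bernoulli_race_output_general {Ω : Type*} [MeasurableSpace Ω]
    (μ : Measure Ω)
    (N : ℕ) (c b : Fin N → ℝ)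
    (hc : ∀ i, 0 < c i) (hb : ∀ i, b i ∈ Set.Icc (0:ℝ) 1)
    (hpos : 0 < ∑ k, c k * b k)
    (I : Ω → Fin N) (Z : Ω → Bool)
    (hI : Measurable I)
    (hjoint : ∀ i, μ {ω | I ω = i ∧ Z ω = true}
      = ENNReal.ofReal ((c i / ∑ k, c k) * b i)) :
    ∀ i, μ[|{ω | Z ω = true}] {ω | I ω = i}
      = ENNReal.ofReal (c i * b i / ∑ k, c k * b k) := by
  have hC : 0 < ∑ k, c k :=
    Finset.sum_pos (fun k _ => hc k) (Finset.nonempty_of_sum_ne_zero hpos.ne')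
  intro i
  rw [cond_apply_fiber_eq_div_sum hI]
  simp only [Set.mem_ofPred_eq, hjoint]
  rw [ENNReal.ofReal_div_sum_ofReal fun j => mul_nonneg (div_nonneg (hc j).le hC.le) (hb j).1]
  simp only [div_mul_eq_mul_div, ← Finset.sum_div]
  rw [div_div_div_cancel_right₀ hC.ne']

/-- Bernoulli race output distribution: conditionally on acceptance, the
returned index `i` has probability `c i * b i / ∑ k, c k * b k`. -/
theorem bernoulli_race_output {Ω : Type*} [MeasurableSpace Ω]
    (μ : Measure Ω) [IsProbabilityMeasure μ]
    (N : ℕ) (hN : 0 < N) (c b : Fin N → ℝ)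
    (hc : ∀ i, 0 < c i) (hb : ∀ i, b i ∈ Set.Icc (0:ℝ) 1)
    (hpos : 0 < ∑ k, c k * b k)
    (I : Ω → Fin N) (Z : Ω → Bool)
    (hI : Measurable I) (hZ : Measurable Z)
    (hjoint : ∀ i, μ {ω | I ω = i ∧ Z ω = true}
      = ENNReal.ofReal ((c i / ∑ k, c k) * b i)) :
    ∀ i, μ[|{ω | Z ω = true}] {ω | I ω = i}
      = ENNReal.ofReal (c i * b i / ∑ k, c k * b k) :=
  bernoulli_race_output_general μ N c b hc hb hpos I Z hI hjoint
end

section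
/- Let φ: [0,Δ] → ℝ be a measurable function with 0 ≤ c - φ(w) ≤ λ for all w (given constants c ∈ ℝ, λ > 0). Let κ ~ Poisson(λΔ), let U_1, U_2, ... be i.i.d. Uniform[0,Δ], all independent. Then the estimator P̂ = exp((λ - c)Δ) · prod_{i=1}^{κ} (c - φ(U_i))/λ satisfies E[P̂] = exp(-∫_0^Δ φ(s) ds). -/
open MeasureTheory ProbabilityTheory Finset
open scoped ENNReal

/-! Conditionally on `κ = k`, independence turns the expectation of the product into `m ^ k`,
where `m = (cΔ - ∫₀^Δ φ) / (λΔ) ∈ [0, 1]` is the mean of one factor `(c - φ(U_i)) / λ`.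
Averaging `m ^ κ` against the Poisson weights gives the generating function `exp (λΔ (m - 1))`,
and `exp ((λ - c)Δ) * exp (λΔ (m - 1)) = exp (-∫₀^Δ φ)`. The computation runs in lower Lebesgue
integrals, where the sum over `k` needs no integrability; the factors are almost surely
nonnegative since the `U_i` lie in `[0, Δ]` almost surely. -/

theorem Measurable.prod_range {Ω M : Type*} [MeasurableSpace Ω] [CommMonoid M] [MeasurableSpace M]
    [MeasurableMul₂ M] {κ : Ω → ℕ} (hκ : Measurable κ) {f : ℕ → Ω → M}
    (hf : ∀ i, Measurable (f i)) :
    Measurable fun ω => ∏ i ∈ range (κ ω), f i ω :=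
  (measurable_from_prod_countable_left (f := fun p : Ω × ℕ => ∏ i ∈ range p.2, f i p.1)
    fun k => measurable_prod (range k) fun i _ => hf i).comp (measurable_id.prodMk hκ)

theorem ae_mem_of_map_eq_smul_restrict {α β : Type*} [MeasurableSpace α] [MeasurableSpace β]
    {μ : Measure α} {X : α → β} (hX : AEMeasurable X μ) {ν : Measure β} {s : Set β}
    (hs : MeasurableSet s) {a : ℝ≥0∞} (h : μ.map X = a • ν.restrict s) :
    ∀ᵐ ω ∂μ, X ω ∈ s :=
  ae_of_ae_map hX (h ▸ Measure.ae_smul_measure (ae_restrict_mem hs) a)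

theorem tsum_ofReal_poisson_mul_pow {r t : ℝ} (hr : 0 ≤ r) (ht : 0 ≤ t) :
    ∑' k : ℕ, ENNReal.ofReal (Real.exp (-r) * r ^ k / Nat.factorial k) * ENNReal.ofReal t ^ k
      = ENNReal.ofReal (Real.exp (r * (t - 1))) := by
  have hterm : ∀ k : ℕ,
      ENNReal.ofReal (Real.exp (-r) * r ^ k / Nat.factorial k) * ENNReal.ofReal t ^ k
        = ENNReal.ofReal (Real.exp (-r) * ((r * t) ^ k / Nat.factorial k)) := fun k => by
    rw [← ENNReal.ofReal_pow ht, ← ENNReal.ofReal_mul (by positivity)]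
    ring_nf
  have hsum := (NormedSpace.expSeries_div_hasSum_exp (r * t)).mul_left (Real.exp (-r))
  rw [← Real.exp_eq_exp_ℝ, ← Real.exp_add] at hsum
  simp_rw [hterm]
  rw [← ENNReal.ofReal_tsum_of_nonneg (fun k => by positivity) hsum.summable, hsum.tsum_eq]
  ring_nf

theorem lintegral_prod_range_eq_tsum {Ω : Type*} [MeasurableSpace Ω] {μ : Measure Ω}
    {κ : Ω → ℕ} {U : ℕ → Ω → ℝ} (hκ : Measurable κ) (hU : ∀ i, Measurable (U i))
    (hindep : iIndepFun (fun o : Option ℕ => o.elim (fun ω => (κ ω : ℝ)) U) μ)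
    {g : ℝ → ℝ≥0∞} (hg : Measurable g) :
    ∫⁻ ω, ∏ i ∈ range (κ ω), g (U i ω) ∂μ
      = ∑' k, μ {ω | κ ω = k} * ∏ i ∈ range k, ∫⁻ ω, g (U i ω) ∂μ := by
  set X := fun o : Option ℕ => o.elim (fun ω => (κ ω : ℝ)) U
  have hX : ∀ o, Measurable (X o) := by
    rintro (_ | i)
    exacts [measurable_from_nat.comp hκ, hU i]
  have hsplit : ∀ ω, ∏ i ∈ range (κ ω), g (U i ω)
      = ∑' k : ℕ, Set.indicator {(k : ℝ)} 1 (κ ω : ℝ) * ∏ i ∈ range k, g (U i ω) := fun ω => by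
    rw [tsum_eq_single (κ ω) fun k hk => by simp [Ne.symm hk]]
    simp
  have hterm : ∀ k : ℕ, ∫⁻ ω, Set.indicator {(k : ℝ)} 1 (κ ω : ℝ) * ∏ i ∈ range k, g (U i ω) ∂μ
      = μ {ω | κ ω = k} * ∏ i ∈ range k, ∫⁻ ω, g (U i ω) ∂μ := by
    intro k
    set G : Option ℕ → ℝ → ℝ≥0∞ := fun o => o.elim (Set.indicator {(k : ℝ)} 1) fun _ => g
    have hG : ∀ o, Measurable (G o) := by
      rintro (_ | i)
      exacts [measurable_one.indicator (measurableSet_singleton _), hg]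
    have h := lintegral_prod_eq_prod_lintegral_of_indepFun (insertNone (range k))
      (fun o => G o ∘ X o) (hindep.comp G hG) fun o => (hG o).comp (hX o)
    simp only [prod_insertNone] at h
    refine h.trans (congrArg (· * _) ?_)
    change ∫⁻ ω, Set.indicator {(k : ℝ)} 1 (κ ω : ℝ) ∂μ = _
    rw [← lintegral_indicator_one (s := {ω | κ ω = k}) (hκ (measurableSet_singleton k))]
    congr with ω
    simp [Set.indicator_apply]
  rw [lintegral_congr hsplit, lintegral_tsum fun k => ?_, tsum_congr hterm]
  exact (((measurable_one.indicator (measurableSet_singleton _)).comp (hX none)).mul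
    (measurable_prod _ fun i _ => hg.comp (hU i))).aemeasurable

theorem intervalIntegrable_of_sub_mem_Icc {a b c lam : ℝ} (hab : a ≤ b) {φ : ℝ → ℝ}
    (hφm : Measurable φ) (hφ : ∀ w ∈ Set.Icc a b, c - φ w ∈ Set.Icc 0 lam) :
    IntervalIntegrable φ volume a b := by
  refine (intervalIntegrable_iff_integrableOn_Icc_of_le hab).2 <|
    Measure.integrableOn_of_bounded (M := |c| + lam) measure_Icc_lt_top.ne
      hφm.aestronglyMeasurable ((ae_restrict_iff' measurableSet_Icc).2 (ae_of_all _ fun w hw => ?_))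
  obtain ⟨h0, hlam⟩ := hφ w hw
  rw [Real.norm_eq_abs, abs_le]
  constructor <;> linarith [neg_abs_le c, le_abs_self c]

theorem intervalIntegral_le_of_sub_mem_Icc {a b c lam : ℝ} (hab : a ≤ b) {φ : ℝ → ℝ}
    (hφm : Measurable φ) (hφ : ∀ w ∈ Set.Icc a b, c - φ w ∈ Set.Icc 0 lam) :
    ∫ s in a..b, φ s ≤ (b - a) * c := by
  rw [← smul_eq_mul, ← intervalIntegral.integral_const]
  exact intervalIntegral.integral_mono_on hab (intervalIntegrable_of_sub_mem_Icc hab hφm hφ)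
    intervalIntegrable_const fun w hw => by linarith [(hφ w hw).1]

theorem setLIntegral_Icc_ofReal_sub_div {Δ lam c : ℝ} (hΔ : 0 ≤ Δ) (hlam : 0 < lam) {φ : ℝ → ℝ}
    (hφm : Measurable φ) (hφ : ∀ w ∈ Set.Icc 0 Δ, c - φ w ∈ Set.Icc 0 lam) :
    ∫⁻ x in Set.Icc 0 Δ, ENNReal.ofReal ((c - φ x) / lam)
      = ENNReal.ofReal ((Δ * c - ∫ s in 0..Δ, φ s) / lam) := by
  have hφint := intervalIntegrable_of_sub_mem_Icc hΔ hφm hφ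
  have hint : IntervalIntegrable (fun x => (c - φ x) / lam) volume 0 Δ :=
    (intervalIntegrable_const.sub hφint).div_const lam
  have hnonneg : 0 ≤ᵐ[volume.restrict (Set.Ioc 0 Δ)] fun x => (c - φ x) / lam :=
    (ae_restrict_iff' measurableSet_Ioc).2 (ae_of_all _ fun x hx =>
      div_nonneg (hφ x (Set.Ioc_subset_Icc_self hx)).1 hlam.le)
  rw [setLIntegral_congr Ioc_ae_eq_Icc.symm, ← ofReal_integral_eq_lintegral_ofReal hint.1 hnonneg,
    ← intervalIntegral.integral_of_le hΔ, intervalIntegral.integral_div,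
    intervalIntegral.integral_sub intervalIntegrable_const hφint, intervalIntegral.integral_const,
    smul_eq_mul, sub_zero]

theorem lintegral_ofReal_sub_div_of_map_eq_uniform {Ω : Type*} [MeasurableSpace Ω]
    {μ : Measure Ω} {V : Ω → ℝ} (hV : Measurable V) {Δ lam c : ℝ} (hΔ : 0 < Δ) (hlam : 0 < lam)
    {φ : ℝ → ℝ} (hφm : Measurable φ) (hφ : ∀ w ∈ Set.Icc 0 Δ, c - φ w ∈ Set.Icc 0 lam)
    (hmap : μ.map V = (ENNReal.ofReal Δ)⁻¹ • volume.restrict (Set.Icc 0 Δ)) :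
    ∫⁻ ω, ENNReal.ofReal ((c - φ (V ω)) / lam) ∂μ
      = ENNReal.ofReal ((Δ * c - ∫ s in 0..Δ, φ s) / (lam * Δ)) := by
  have hg : Measurable fun x => ENNReal.ofReal ((c - φ x) / lam) :=
    ((measurable_const.sub hφm).div_const lam).ennreal_ofReal
  rw [← lintegral_map hg hV, hmap, lintegral_smul_measure,
    setLIntegral_Icc_ofReal_sub_div hΔ.le hlam hφm hφ, smul_eq_mul,
    ← ENNReal.ofReal_inv_of_pos hΔ, ← ENNReal.ofReal_mul (inv_nonneg.2 hΔ.le)]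
  congr 1
  field_simp

/-- Unbiasedness of the Poisson estimator:
`E[exp((λ-c)Δ) ∏_{i<κ} (c - φ(U_i))/λ] = exp(-∫₀^Δ φ(s) ds)`. -/
theorem poisson_estimator_unbiased {Ω : Type*} [MeasurableSpace Ω]
    (μ : Measure Ω) [IsProbabilityMeasure μ]
    (Δ lam c : ℝ) (hΔ : 0 < Δ) (hlam : 0 < lam)
    (φ : ℝ → ℝ) (hφm : Measurable φ)
    (hφ : ∀ w ∈ Set.Icc (0:ℝ) Δ, c - φ w ∈ Set.Icc (0:ℝ) lam)
    (κ : Ω → ℕ) (U : ℕ → Ω → ℝ)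
    (hκm : Measurable κ) (hUm : ∀ i, Measurable (U i))
    -- κ ~ Poisson(λΔ)
    (hκ : ∀ k : ℕ, μ {ω | κ ω = k}
      = ENNReal.ofReal (Real.exp (-(lam * Δ)) * (lam * Δ) ^ k / Nat.factorial k))
    -- U_i ~ Unif[0,Δ]
    (hU : ∀ i, μ.map (U i) = (ENNReal.ofReal Δ)⁻¹ • volume.restrict (Set.Icc (0:ℝ) Δ))
    -- κ and the U_i are all independent
    (hindep : iIndepFun (m := fun _ => inferInstance)
      (fun o : Option ℕ => o.elim (fun ω => (κ ω : ℝ)) U) μ) :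
    ∫ ω, Real.exp ((lam - c) * Δ) * ∏ i ∈ Finset.range (κ ω), (c - φ (U i ω)) / lam ∂μ
      = Real.exp (-∫ s in (0:ℝ)..Δ, φ s) := by
  have hf : Measurable fun x => (c - φ x) / lam := (measurable_const.sub hφm).div_const lam
  have hmean_nonneg : 0 ≤ (Δ * c - ∫ s in (0:ℝ)..Δ, φ s) / (lam * Δ) := by
    have h := intervalIntegral_le_of_sub_mem_Icc hΔ.le hφm hφ
    rw [sub_zero] at h
    exact div_nonneg (sub_nonneg.2 h) (by positivity)
  have hfactor : ∀ᵐ ω ∂μ, 0 ≤ ∏ i ∈ range (κ ω), (c - φ (U i ω)) / lam ∧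
      ENNReal.ofReal (∏ i ∈ range (κ ω), (c - φ (U i ω)) / lam) =
        ∏ i ∈ range (κ ω), ENNReal.ofReal ((c - φ (U i ω)) / lam) := by
    filter_upwards [ae_all_iff.2 fun i => ae_mem_of_map_eq_smul_restrict (hUm i).aemeasurable
      measurableSet_Icc (hU i)] with ω hω
    have hnn : ∀ i ∈ range (κ ω), 0 ≤ (c - φ (U i ω)) / lam := fun i _ =>
      div_nonneg (hφ _ (hω i)).1 hlam.le
    exact ⟨prod_nonneg hnn, ENNReal.ofReal_prod_of_nonneg hnn⟩
  rw [integral_const_mul, integral_eq_lintegral_of_nonneg_ae (hfactor.mono fun _ h => h.1)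
      (hκm.prod_range fun i => hf.comp (hUm i)).aestronglyMeasurable,
    lintegral_congr_ae (hfactor.mono fun _ h => h.2),
    lintegral_prod_range_eq_tsum hκm hUm hindep hf.ennreal_ofReal]
  simp_rw [lintegral_ofReal_sub_div_of_map_eq_uniform (hUm _) hΔ hlam hφm hφ (hU _), prod_const,
    card_range, hκ]
  rw [tsum_ofReal_poisson_mul_pow (by positivity) hmean_nonneg,
    ENNReal.toReal_ofReal (Real.exp_pos _).le, ← Real.exp_add]
  congr 1
  field_simp
  ring
end

section
/- Let φ: [0,Δ] → ℝ be measurable with 0 ≤ c - φ(w) ≤ λ for all w. Let κ ~ Poisson(λΔ), U_1, U_2, ... i.i.d. Uniform[0,Δ], and V_1, V_2, ... i.i.d. Uniform[0,1], all independent. Define Z = prod_{i=1}^{κ} 1{V_i ≤ (c - φ(U_i))/λ}. Then P(Z = 1) = exp((c - λ)Δ) · exp(-∫_0^Δ φ(s) ds). -/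
/-!
Condition on `κ = k`. The pairs `(U i, V i)` are independent of each other and of `κ`, and for
`U` uniform on `[0, Δ]` and `V` uniform on `[0, 1]` the coin `V ≤ (c - φ U) / λ` succeeds with
probability `q = (λΔ)⁻¹ ∫₀^Δ (c - φ)`, so `P(Z = 1 | κ = k) = q ^ k`. Summing against the
Poisson weights gives `exp (-λΔ) * exp (λΔ q) = exp ((c - λ) Δ - ∫₀^Δ φ)`.
-/

open MeasureTheory ProbabilityTheory Real Set Function

theorem tsum_ofReal_poisson_mul_pow_s8 {a p : ℝ} (ha : 0 ≤ a) (hp : 0 ≤ p) :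
    ∑' k : ℕ, ENNReal.ofReal (exp (-a) * a ^ k / k.factorial) * ENNReal.ofReal p ^ k
      = ENNReal.ofReal (exp (a * p - a)) := by
  have hterm : ∀ k : ℕ, exp (-a) * a ^ k / k.factorial * p ^ k
      = exp (-a) * ((a * p) ^ k / k.factorial) := fun k ↦ by ring
  have hsum : HasSum (fun k : ℕ ↦ exp (-a) * a ^ k / k.factorial * p ^ k) (exp (a * p - a)) := by
    simp_rw [hterm, sub_eq_neg_add, exp_add, exp_eq_exp_ℝ]
    exact (NormedSpace.expSeries_div_hasSum_exp (a * p)).mul_left _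
  simp_rw [← ENNReal.ofReal_pow hp, ← ENNReal.ofReal_mul' (pow_nonneg hp _)]
  rw [← ENNReal.ofReal_tsum_of_nonneg (fun k ↦ by positivity) hsum.summable, hsum.tsum_eq]

theorem volume_restrict_Icc_zero_one_Iic {t : ℝ} (ht : t ∈ Icc (0 : ℝ) 1) :
    volume.restrict (Icc (0 : ℝ) 1) (Iic t) = ENNReal.ofReal t := by
  have hIcc : Iic t ∩ Icc 0 1 = Icc 0 t :=
    Set.ext fun _ ↦ ⟨fun hx ↦ ⟨hx.2.1, hx.1⟩, fun hx ↦ ⟨hx.2, hx.1, hx.2.trans ht.2⟩⟩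
  rw [Measure.restrict_apply measurableSet_Iic, hIcc, Real.volume_Icc, sub_zero]

theorem integrableOn_of_mem_Icc {f : ℝ → ℝ} (hf : Measurable f) {s : Set ℝ}
    (hs : MeasurableSet s) (hs_fin : volume s ≠ ⊤) {a b : ℝ} (hfab : ∀ x ∈ s, f x ∈ Icc a b) :
    IntegrableOn f s :=
  Measure.integrableOn_of_bounded hs_fin hf.aestronglyMeasurable (M := max |a| |b|) <|
    ae_restrict_of_forall_mem hs fun x hx ↦ abs_le_max_abs_abs (hfab x hx).1 (hfab x hx).2

theorem setIntegral_Icc_const_sub {φ : ℝ → ℝ} {a b : ℝ} (hab : a ≤ b)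
    (hφ : IntegrableOn φ (Icc a b)) (c : ℝ) :
    ∫ u in Icc a b, (c - φ u) = c * (b - a) - ∫ s in a..b, φ s := by
  rw [integral_sub (integrableOn_const (C := c) measure_Icc_lt_top.ne) hφ, setIntegral_const,
    measureReal_def, Real.volume_Icc, ENNReal.toReal_ofReal (sub_nonneg.2 hab), smul_eq_mul,
    mul_comm, intervalIntegral.integral_of_le hab, integral_Icc_eq_integral_Ioc]

namespace ProbabilityTheory

variable {Ω ι η : Type*} {mΩ : MeasurableSpace Ω} {μ : Measure Ω}

theorem iIndep.iIndep_biSup {m : ι → MeasurableSpace Ω} (h_le : ∀ i, m i ≤ mΩ)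
    (h : iIndep m μ) {S : η → Set ι} (hS : Pairwise (Disjoint on S)) :
    iIndep (fun j ↦ ⨆ i ∈ S j, m i) μ := by
  classical
  have := h.isProbabilityMeasure
  rw [iIndep_iff]
  intro J
  induction J using Finset.induction_on with
  | empty => intro E _; simp
  | insert a J haJ ih =>
    intro E hE
    have hdisj : Disjoint (S a) (⋃ j ∈ J, S j) :=
      disjoint_iUnion₂_right.2 fun j hj ↦ hS (ne_of_mem_of_not_mem hj haJ).symm
    have hJ : MeasurableSet[⨆ i ∈ ⋃ j ∈ J, S j, m i] (⋂ j ∈ J, E j) :=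
      Finset.measurableSet_biInter J fun j hj ↦
        MeasurableSpace.le_def.1 (biSup_mono fun i hi ↦ mem_biUnion hj hi) _
          (hE j (Finset.mem_insert_of_mem hj))
    rw [Finset.set_biInter_insert, Finset.prod_insert haJ,
      (Indep_iff _ _ μ).1 (indep_iSup_of_disjoint h_le h hdisj) _ _
        (hE a (Finset.mem_insert_self a J)) hJ,
      ih fun j hj ↦ hE j (Finset.mem_insert_of_mem hj)]

abbrev pairedComap (N : Ω → ℕ) (U V : ι → Ω → ℝ) : Option ι → MeasurableSpace Ω
  | none => .comap N inferInstance
  | some i => .comap (U i) inferInstance ⊔ .comap (V i) inferInstance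

theorem pairedComap_le {N : Ω → ℕ} {U V : ι → Ω → ℝ} (hN : Measurable N)
    (hU : ∀ i, Measurable (U i)) (hV : ∀ i, Measurable (V i)) (j : Option ι) :
    pairedComap N U V j ≤ mΩ := by
  cases j with
  | none => exact hN.comap_le
  | some i => exact sup_le (hU i).comap_le (hV i).comap_le

theorem iIndep_pairedComap {N : Ω → ℕ} {U V : ι → Ω → ℝ} (hN : Measurable N)
    (hU : ∀ i, Measurable (U i)) (hV : ∀ i, Measurable (V i))
    (h : iIndepFun (fun o : Option (ι ⊕ ι) ↦ o.elim (fun ω ↦ (N ω : ℝ)) (Sum.elim U V)) μ) :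
    iIndep (pairedComap N U V) μ := by
  set X := fun o : Option (ι ⊕ ι) ↦ o.elim (fun ω ↦ (N ω : ℝ)) (Sum.elim U V)
  have hX : ∀ o, Measurable (X o) := by
    rintro (_ | i | i)
    exacts [measurable_from_top.comp hN, hU i, hV i]
  let S : Option ι → Set (Option (ι ⊕ ι)) :=
    fun j ↦ j.elim {none} fun i ↦ {some (.inl i), some (.inr i)}
  have hS : Pairwise (Disjoint on S) := by
    rintro (_ | i) (_ | j) hij <;> simp_all [S, onFun, eq_comm]
  refine iIndep_of_iIndep_of_le
    (((iIndepFun_iff_iIndep _ _ _).1 h).iIndep_biSup (fun o ↦ (hX o).comap_le) hS) ?_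
  have hX_le : ∀ j, ∀ o ∈ S j, MeasurableSpace.comap (X o) inferInstance
      ≤ ⨆ o ∈ S j, MeasurableSpace.comap (X o) inferInstance :=
    fun j o ho ↦ le_iSup₂ (f := fun o _ ↦ MeasurableSpace.comap (X o) inferInstance) o ho
  rintro (_ | i)
  · -- `N` is recovered from its real cast as `⌊(N : ℝ)⌋₊`
    have hN_X : Measurable[.comap (X none) inferInstance] N := by
      simpa [X, comp_def] using Nat.measurable_floor.comp (comap_measurable (X none))
    exact hN_X.comap_le.trans (hX_le none none rfl)
  · exact sup_le (hX_le (some i) (some (.inl i)) (by simp [S]))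
      (hX_le (some i) (some (.inr i)) (by simp [S]))

theorem measure_forall_lt_of_poisson {m : Option ℕ → MeasurableSpace Ω} (h_le : ∀ j, m j ≤ mΩ)
    (hind : iIndep m μ) {N : Ω → ℕ} {A : ℕ → Set Ω} (hN : Measurable[m none] N)
    (hA : ∀ i, MeasurableSet[m (some i)] (A i)) {a p : ℝ} (ha : 0 ≤ a) (hp : 0 ≤ p)
    (hN_law : ∀ k : ℕ, μ {ω | N ω = k} = ENNReal.ofReal (exp (-a) * a ^ k / k.factorial))
    (hA_prob : ∀ i, μ (A i) = ENNReal.ofReal p) :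
    μ {ω | ∀ i < N ω, ω ∈ A i} = ENNReal.ofReal (exp (a * p - a)) := by
  have hcond : ∀ k : ℕ, μ ({ω | N ω = k} ∩ ⋂ i ∈ Finset.range k, A i)
      = μ {ω | N ω = k} * ENNReal.ofReal p ^ k := by
    intro k
    let E : Option ℕ → Set Ω := fun j ↦ j.elim {ω | N ω = k} A
    have hE : ∀ j, MeasurableSet[m j] (E j) := by
      rintro (_ | i)
      · exact hN (measurableSet_singleton k)
      · exact hA i
    have key := hind.meas_biInter (S := insert none ((Finset.range k).image some))
      fun j _ ↦ hE j
    rw [Finset.set_biInter_insert, Finset.set_biInter_finset_image, Finset.prod_insert (by simp),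
      Finset.prod_image (by simp)] at key
    exact key.trans (by simp [E, hA_prob])
  have hdisj : Pairwise (Disjoint on fun k ↦ {ω | N ω = k} ∩ ⋂ i ∈ Finset.range k, A i) :=
    fun j k hjk ↦ disjoint_left.2 fun ω hj hk ↦ hjk (hj.1.symm.trans hk.1)
  have hmeas : ∀ k, MeasurableSet ({ω | N ω = k} ∩ ⋂ i ∈ Finset.range k, A i) := fun k ↦
    (h_le none _ (hN (measurableSet_singleton k))).inter
      (Finset.measurableSet_biInter _ fun i _ ↦ h_le _ _ (hA i))
  have hsplit : {ω | ∀ i < N ω, ω ∈ A i} = ⋃ k, {ω | N ω = k} ∩ ⋂ i ∈ Finset.range k, A i := by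
    ext ω
    simp
  rw [hsplit, measure_iUnion hdisj hmeas]
  simp_rw [hcond, hN_law]
  exact tsum_ofReal_poisson_mul_pow_s8 ha hp

section Finite

variable [IsFiniteMeasure μ]

theorem measure_le_comp_eq_lintegral {U V : Ω → ℝ} (hU : Measurable U) (hV : Measurable V)
    (hUV : IndepFun U V μ) (hV_law : μ.map V = volume.restrict (Icc 0 1)) {g : ℝ → ℝ}
    (hg : Measurable g) (hg01 : ∀ᵐ u ∂μ.map U, g u ∈ Icc 0 1) :
    μ {ω | V ω ≤ g (U ω)} = ∫⁻ u, ENNReal.ofReal (g u) ∂μ.map U := by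
  have hs : MeasurableSet {x : ℝ × ℝ | x.2 ≤ g x.1} :=
    measurableSet_le measurable_snd (hg.comp measurable_fst)
  change μ ((fun ω ↦ (U ω, V ω)) ⁻¹' {x | x.2 ≤ g x.1}) = _
  rw [← Measure.map_apply (hU.prodMk hV) hs,
    (indepFun_iff_map_prod_eq_prod_map_map hU.aemeasurable hV.aemeasurable).1 hUV,
    Measure.prod_apply hs, hV_law]
  exact lintegral_congr_ae (hg01.mono fun u hu ↦ volume_restrict_Icc_zero_one_Iic hu)

theorem measure_le_comp_of_uniform {U V : Ω → ℝ} (hU : Measurable U) (hV : Measurable V)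
    (hUV : IndepFun U V μ) {Δ : ℝ} (hΔ : 0 < Δ)
    (hU_law : μ.map U = (ENNReal.ofReal Δ)⁻¹ • volume.restrict (Icc 0 Δ))
    (hV_law : μ.map V = volume.restrict (Icc 0 1)) {g : ℝ → ℝ} (hg : Measurable g)
    (hg01 : ∀ u ∈ Icc 0 Δ, g u ∈ Icc 0 1) :
    μ {ω | V ω ≤ g (U ω)} = ENNReal.ofReal ((∫ u in Icc 0 Δ, g u) / Δ) := by
  have hg01_ae : ∀ᵐ u ∂volume.restrict (Icc 0 Δ), g u ∈ Icc 0 1 :=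
    (ae_restrict_mem measurableSet_Icc).mono hg01
  have hg_int : IntegrableOn g (Icc 0 Δ) :=
    integrableOn_of_mem_Icc hg measurableSet_Icc measure_Icc_lt_top.ne hg01
  rw [measure_le_comp_eq_lintegral hU hV hUV hV_law hg
      (by rw [hU_law]; exact Measure.ae_smul_measure hg01_ae _),
    hU_law, lintegral_smul_measure,
    ← ofReal_integral_eq_lintegral_ofReal hg_int (hg01_ae.mono fun _ hu ↦ hu.1),
    ENNReal.ofReal_div_of_pos hΔ, ENNReal.div_eq_inv_mul, smul_eq_mul]

end Finite

end ProbabilityTheory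

/-- The Bernoulli-factory coin `Z = ∏_{i<κ} 1{V_i ≤ (c - φ(U_i))/λ}` has success
probability `exp((c-λ)Δ) · exp(-∫₀^Δ φ(s) ds)`. -/
theorem poisson_coin_success_probability {Ω : Type*} [MeasurableSpace Ω]
    (μ : Measure Ω) [IsProbabilityMeasure μ]
    (Δ lam c : ℝ) (hΔ : 0 < Δ) (hlam : 0 < lam)
    (φ : ℝ → ℝ) (hφm : Measurable φ)
    (hφ : ∀ w ∈ Set.Icc (0:ℝ) Δ, c - φ w ∈ Set.Icc (0:ℝ) lam)
    (κ : Ω → ℕ) (U V : ℕ → Ω → ℝ)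
    (hκm : Measurable κ) (hUm : ∀ i, Measurable (U i)) (hVm : ∀ i, Measurable (V i))
    -- κ ~ Poisson(λΔ)
    (hκ : ∀ k : ℕ, μ {ω | κ ω = k}
      = ENNReal.ofReal (Real.exp (-(lam * Δ)) * (lam * Δ) ^ k / Nat.factorial k))
    -- U_i ~ Unif[0,Δ], V_i ~ Unif[0,1]
    (hU : ∀ i, μ.map (U i) = (ENNReal.ofReal Δ)⁻¹ • volume.restrict (Set.Icc (0:ℝ) Δ))
    (hV : ∀ i, μ.map (V i) = volume.restrict (Set.Icc (0:ℝ) 1))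
    -- κ, the U_i and the V_i are all independent
    (hindep : iIndepFun (m := fun _ => inferInstance)
      (fun o : Option (ℕ ⊕ ℕ) => o.elim (fun ω => (κ ω : ℝ)) (Sum.elim U V)) μ) :
    μ {ω | ∀ i < κ ω, V i ω ≤ (c - φ (U i ω)) / lam}
      = ENNReal.ofReal (Real.exp ((c - lam) * Δ) * Real.exp (-∫ s in (0:ℝ)..Δ, φ s)) := by
  set g : ℝ → ℝ := fun u ↦ (c - φ u) / lam
  have hg : Measurable g := (measurable_const.sub hφm).div_const lam
  have hg01 : ∀ u ∈ Icc 0 Δ, g u ∈ Icc 0 1 := fun u hu ↦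
    ⟨div_nonneg (hφ u hu).1 hlam.le, (div_le_one hlam).2 (hφ u hu).2⟩
  have hp : 0 ≤ (∫ u in Icc 0 Δ, g u) / Δ :=
    div_nonneg (setIntegral_nonneg measurableSet_Icc fun u hu ↦ (hg01 u hu).1) hΔ.le
  have hcoin : ∀ i, μ {ω | V i ω ≤ g (U i ω)} = ENNReal.ofReal ((∫ u in Icc 0 Δ, g u) / Δ) :=
    fun i ↦ measure_le_comp_of_uniform (hUm i) (hVm i)
      (hindep.indepFun (i := some (.inl i)) (j := some (.inr i)) (by simp)) hΔ (hU i) (hV i) hg hg01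
  have hcoin_meas : ∀ i, MeasurableSet[pairedComap κ U V (some i)] {ω | V i ω ≤ g (U i ω)} :=
    fun i ↦ measurableSet_le ((comap_measurable _).mono le_sup_right le_rfl)
      (hg.comp ((comap_measurable _).mono le_sup_left le_rfl))
  refine (measure_forall_lt_of_poisson (pairedComap_le hκm hUm hVm)
    (iIndep_pairedComap hκm hUm hVm hindep) (comap_measurable κ) hcoin_meas (by positivity) hp hκ
    hcoin).trans ?_
  have hφ_int : IntegrableOn φ (Icc 0 Δ) :=
    integrableOn_of_mem_Icc hφm measurableSet_Icc measure_Icc_lt_top.ne (a := c - lam) (b := c)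
      fun w hw ↦ ⟨by linarith [(hφ w hw).2], by linarith [(hφ w hw).1]⟩
  rw [integral_div, setIntegral_Icc_const_sub hΔ.le hφ_int, sub_zero, ← exp_add]
  congr 2
  field_simp
  ring
end

section
/- Let I_1, ..., I_N be i.i.d. draws from the Bernoulli race output distribution p(i) = c_i b_i / sum_k c_k b_k, with C_1,...,C_N the corresponding i.i.d. geometric iteration counts with success probability ρ_N = sum_k c_k b_k / sum_k c_k. Then the random variable ((1/N) sum_{k=1}^N c_k) · (N−1)/(sum_{k=1}^N C_k − 1) is an unbiased estimator of (1/N) sum_{k=1}^N c_k b_k. -/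
open MeasureTheory ProbabilityTheory Finset

/-!
Write `C k = 1 + D k`, where the `D k` are i.i.d. geometric failure counts. Their sum `F` has the
negative binomial law `P(F = f) = (f + N - 1).choose (N - 1) * ρ ^ N * (1 - ρ) ^ f`, and
`(N - 1) / (f + N - 1) * (f + N - 1).choose (N - 1) = (f + N - 2).choose (N - 2)`. Hence
`E[(N - 1) / (∑ C k - 1)] = E[(N - 1) / (F + N - 1)]
  = ρ ^ N * ∑ f, (f + N - 2).choose (N - 2) * (1 - ρ) ^ f = ρ ^ N / ρ ^ (N - 1) = ρ`,
and `(1 / N) * (∑ c k) * ρ = (1 / N) * ∑ c k * b k`.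
-/

/-- Probability of `f` failures before the `(k + 1)`-st success in Bernoulli trials with success
probability `ρ`. -/
noncomputable def negBinomialMass (ρ : ℝ) (k f : ℕ) : ℝ :=
  (f + k).choose k * ρ ^ (k + 1) * (1 - ρ) ^ f

lemma negBinomialMass_nonneg {ρ : ℝ} (hρ0 : 0 ≤ ρ) (hρ1 : ρ ≤ 1) (k f : ℕ) :
    0 ≤ negBinomialMass ρ k f := by
  have : 0 ≤ 1 - ρ := by linarith
  unfold negBinomialMass; positivity

lemma sum_antidiagonal_negBinomialMass (ρ : ℝ) (k f : ℕ) :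
    ∑ p ∈ antidiagonal f, negBinomialMass ρ 0 p.1 * negBinomialMass ρ k p.2
      = negBinomialMass ρ (k + 1) f := by
  have hterm : ∀ p ∈ antidiagonal f, negBinomialMass ρ 0 p.1 * negBinomialMass ρ k p.2
      = (p.2 + k).choose k * (ρ ^ (k + 2) * (1 - ρ) ^ f) := by
    rintro ⟨i, j⟩ hij
    rw [HasAntidiagonal.mem_antidiagonal] at hij
    subst hij
    simp only [negBinomialMass, pow_add, add_zero, Nat.choose_zero_right, Nat.cast_one]
    ring
  rw [sum_congr rfl hterm, ← sum_mul, ← Nat.sum_antidiagonal_swap]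
  simp only [Prod.snd_swap, negBinomialMass]
  rw [Nat.sum_antidiagonal_eq_sum_range_succ_mk, ← Nat.cast_sum, Nat.sum_range_add_choose,
    add_assoc]
  ring

lemma hasSum_negBinomialMass_mul_div (k : ℕ) {ρ : ℝ} (hρ0 : 0 < ρ) (hρ1 : ρ ≤ 1) :
    HasSum (fun f : ℕ ↦ negBinomialMass ρ (k + 1) f * ((k + 1) / (f + (k + 1)))) ρ := by
  have hq : ‖1 - ρ‖ < 1 := by
    rw [Real.norm_eq_abs, abs_of_nonneg (by linarith)]; linarith
  have hgeom := (hasSum_choose_mul_geometric_of_norm_lt_one k hq).mul_left (ρ ^ (k + 2))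
  rw [sub_sub_cancel, pow_succ ρ (k + 1), mul_one_div, mul_div_cancel_left₀ _ (by positivity)]
    at hgeom
  refine hgeom.congr_fun fun f ↦ ?_
  have hchoose :
      ((f + (k + 1)).choose (k + 1) : ℝ) * (k + 1) = (f + k + 1) * (f + k).choose k := by
    exact_mod_cast (Nat.add_one_mul_choose_eq (f + k) k).symm
  simp only [negBinomialMass]
  field_simp
  linear_combination (ρ ^ (k + 2) * (1 - ρ) ^ f) * hchoose

lemma cast_sum_eq_cast_sum_sub_one_add_card {ι : Type*} (s : Finset ι) {x : ι → ℕ}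
    (hx : ∀ i ∈ s, x i ≠ 0) :
    ∑ i ∈ s, (x i : ℝ) = ((∑ i ∈ s, (x i - 1) : ℕ) : ℝ) + #s := by
  have hpred : ∀ i ∈ s, (x i : ℝ) = ((x i - 1 : ℕ) : ℝ) + 1 := fun i hi ↦ by
    rw [Nat.cast_sub (Nat.one_le_iff_ne_zero.2 (hx i hi))]; ring
  rw [sum_congr rfl hpred, sum_add_distrib, sum_const, nsmul_one, Nat.cast_sum]

lemma sum_mul_div_sum_mem_Ioc {ι : Type*} [Fintype ι] [Nonempty ι] {c b : ι → ℝ}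
    (hc : ∀ i, 0 < c i) (hb : ∀ i, b i ∈ Set.Ioc 0 1) :
    (∑ i, c i * b i) / ∑ i, c i ∈ Set.Ioc 0 1 := by
  have hsum : 0 < ∑ i, c i := sum_pos (fun i _ ↦ hc i) univ_nonempty
  refine ⟨div_pos (sum_pos (fun i _ ↦ mul_pos (hc i) (hb i).1) univ_nonempty) hsum, ?_⟩
  rw [div_le_one hsum]
  exact sum_le_sum fun i _ ↦ mul_le_of_le_one_right (hc i).le (hb i).2

section

variable {Ω : Type*} [MeasurableSpace Ω] {μ : Measure Ω}

lemma ae_ne_zero_of_geometric [IsProbabilityMeasure μ] {X : Ω → ℕ} (hX : Measurable X)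
    {ρ : ℝ} (hρ0 : 0 < ρ) (hρ1 : ρ ≤ 1)
    (hgeom : ∀ n, 1 ≤ n → μ {ω | X ω = n} = ENNReal.ofReal (ρ * (1 - ρ) ^ (n - 1))) :
    ∀ᵐ ω ∂μ, X ω ≠ 0 := by
  have hcompl : {ω | X ω ≠ 0} = ⋃ n : ℕ, {ω | X ω = n + 1} := by
    ext ω; simp [Nat.exists_eq_add_one, Nat.pos_iff_ne_zero]
  have hdisj : Pairwise (Function.onFun Disjoint fun n : ℕ ↦ {ω | X ω = n + 1}) := by
    intro m n hmn
    simp only [Function.onFun, Set.disjoint_left]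
    intro ω (h1 : X ω = m + 1) (h2 : X ω = n + 1)
    omega
  have hq : 1 - ρ < 1 := by linarith
  refine ae_iff.2 ((prob_compl_eq_zero_iff (hX (measurableSet_singleton 0)).compl).2 ?_)
  rw [show (X ⁻¹' {0})ᶜ = {ω | X ω ≠ 0} from rfl, hcompl,
    measure_iUnion hdisj fun n ↦ hX (measurableSet_singleton _)]
  simp_rw [hgeom _ (Nat.le_add_left 1 _), Nat.add_sub_cancel]
  rw [← ENNReal.ofReal_tsum_of_nonneg (fun n ↦ by positivity)
    ((summable_geometric_of_lt_one (by linarith) hq).mul_left ρ), tsum_mul_left,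
    tsum_geometric_of_lt_one (by linarith) hq, sub_sub_cancel, mul_inv_cancel₀ hρ0.ne',
    ENNReal.ofReal_one]

lemma measure_sub_one_eq_of_geometric [IsProbabilityMeasure μ] {X : Ω → ℕ} (hX : Measurable X)
    {ρ : ℝ} (hρ0 : 0 < ρ) (hρ1 : ρ ≤ 1)
    (hgeom : ∀ n, 1 ≤ n → μ {ω | X ω = n} = ENNReal.ofReal (ρ * (1 - ρ) ^ (n - 1)))
    (f : ℕ) :
    μ {ω | X ω - 1 = f} = ENNReal.ofReal (negBinomialMass ρ 0 f) := by
  have hae : {ω | X ω - 1 = f} =ᵐ[μ] {ω | X ω = f + 1} := by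
    refine Filter.eventuallyEq_set.2 ?_
    filter_upwards [ae_ne_zero_of_geometric hX hρ0 hρ1 hgeom] with ω hω
    omega
  rw [measure_congr hae, hgeom _ (Nat.le_add_left 1 f), Nat.add_sub_cancel]
  simp [negBinomialMass]

namespace ProbabilityTheory

lemma IndepFun.measure_add_eq_sum_antidiagonal {X Y : Ω → ℕ} (hX : Measurable X)
    (hY : Measurable Y) (hXY : IndepFun X Y μ) (s : ℕ) :
    μ {ω | X ω + Y ω = s}
      = ∑ p ∈ antidiagonal s, μ {ω | X ω = p.1} * μ {ω | Y ω = p.2} := by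
  have hfibers : {ω | X ω + Y ω = s} = (fun ω ↦ (X ω, Y ω)) ⁻¹' ↑(antidiagonal s) := by
    ext ω; simp
  rw [hfibers, ← sum_measure_preimage_singleton _
    fun p _ ↦ (hX.prodMk hY) (measurableSet_singleton p)]
  refine sum_congr rfl fun p _ ↦ ?_
  have hfiber : (fun ω ↦ (X ω, Y ω)) ⁻¹' {p} = X ⁻¹' {p.1} ∩ Y ⁻¹' {p.2} := by
    ext ω; simp [Prod.ext_iff]
  rw [hfiber, hXY.measure_inter_preimage_eq_mul _ _ (measurableSet_singleton _)
    (measurableSet_singleton _)]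
  rfl

lemma iIndepFun.measure_sum_eq_negBinomialMass {ι : Type*} {D : ι → Ω → ℕ}
    (hD : ∀ i, Measurable (D i)) (hindep : iIndepFun D μ)
    {ρ : ℝ} (hρ0 : 0 ≤ ρ) (hρ1 : ρ ≤ 1)
    (hlaw : ∀ i f, μ {ω | D i ω = f} = ENNReal.ofReal (negBinomialMass ρ 0 f))
    {t : Finset ι} (ht : t.Nonempty) (f : ℕ) :
    μ {ω | ∑ i ∈ t, D i ω = f} = ENNReal.ofReal (negBinomialMass ρ (#t - 1) f) := by
  induction ht using Finset.Nonempty.cons_induction generalizing f with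
  | singleton a => simpa using hlaw a f
  | cons a t ha ht ih =>
    have hindep' : IndepFun (D a) (∑ i ∈ t, D i) μ :=
      (hindep.indepFun_finsetSum_of_notMem hD ha).symm
    have hsum : (∑ i ∈ t, D i) = fun ω ↦ ∑ i ∈ t, D i ω := by ext; simp
    rw [hsum] at hindep'
    have hcard : #(cons a t ha) - 1 = (#t - 1) + 1 := by
      rw [card_cons, Nat.sub_add_cancel ht.card_pos, Nat.add_sub_cancel]
    simp_rw [sum_cons]
    rw [hindep'.measure_add_eq_sum_antidiagonal (hD a) (measurable_sum _ fun i _ ↦ hD i),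
      hcard, ← sum_antidiagonal_negBinomialMass, ENNReal.ofReal_sum_of_nonneg
        fun p _ ↦ mul_nonneg (negBinomialMass_nonneg hρ0 hρ1 _ _)
          (negBinomialMass_nonneg hρ0 hρ1 _ _)]
    refine sum_congr rfl fun p _ ↦ ?_
    rw [hlaw, ih, ENNReal.ofReal_mul (negBinomialMass_nonneg hρ0 hρ1 _ _)]

lemma iIndepFun.measure_sum_sub_one_eq_negBinomialMass [IsProbabilityMeasure μ] {ι : Type*}
    [Fintype ι] [Nonempty ι] {X : ι → Ω → ℕ} (hX : ∀ i, Measurable (X i))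
    (hindep : iIndepFun X μ) {ρ : ℝ} (hρ0 : 0 < ρ) (hρ1 : ρ ≤ 1)
    (hgeom : ∀ i, ∀ n, 1 ≤ n → μ {ω | X i ω = n} = ENNReal.ofReal (ρ * (1 - ρ) ^ (n - 1)))
    (f : ℕ) :
    μ {ω | ∑ i, (X i ω - 1) = f}
      = ENNReal.ofReal (negBinomialMass ρ (Fintype.card ι - 1) f) := by
  have hindep' := hindep.comp (fun _ n ↦ n - 1) fun _ ↦ measurable_from_nat
  simpa using hindep'.measure_sum_eq_negBinomialMass (fun i ↦ (hX i).sub_const 1) hρ0.le hρ1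
    (fun i ↦ measure_sub_one_eq_of_geometric (hX i) hρ0 hρ1 (hgeom i)) univ_nonempty f

end ProbabilityTheory

lemma integral_comp_eq_tsum [IsFiniteMeasure μ] {F : Ω → ℕ} (hF : Measurable F)
    {h : ℕ → ℝ} {B : ℝ} (hB : ∀ n, |h n| ≤ B) :
    ∫ ω, h (F ω) ∂μ = ∑' n, μ.real {ω | F ω = n} * h n := by
  rw [← integral_map hF.aemeasurable measurable_from_nat.aestronglyMeasurable,
    integral_countable (Integrable.of_bound measurable_from_nat.aestronglyMeasurable B
      (Filter.Eventually.of_forall hB))]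
  refine tsum_congr fun n ↦ ?_
  rw [map_measureReal_apply hF (measurableSet_singleton n), smul_eq_mul]
  rfl

end

theorem bernoulli_race_likelihood_unbiased_general {Ω : Type*} [MeasurableSpace Ω]
    (μ : Measure Ω) [IsProbabilityMeasure μ]
    (N : ℕ) (hN : 2 ≤ N) (c b : Fin N → ℝ)
    (hc : ∀ i, 0 < c i) (hb : ∀ i, b i ∈ Set.Ioc (0:ℝ) 1)
    (ρ : ℝ) (hρ : ρ = (∑ k, c k * b k) / ∑ k, c k)
    -- the i.i.d. geometric iteration counts with success probability ρ
    (C : Fin N → Ω → ℕ) (hmeas : ∀ k, Measurable (C k))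
    (hindep : iIndepFun C μ)
    (hgeom : ∀ k, ∀ n : ℕ, 1 ≤ n →
      μ {ω | C k ω = n} = ENNReal.ofReal (ρ * (1 - ρ) ^ (n - 1))) :
    ∫ ω, ((1 / (N : ℝ)) * ∑ k, c k) * (((N : ℝ) - 1) / ((∑ k, (C k ω : ℝ)) - 1)) ∂μ
      = (1 / (N : ℝ)) * ∑ k, c k * b k := by
  obtain ⟨m, rfl⟩ : ∃ m, N = m + 2 := ⟨N - 2, by omega⟩
  obtain ⟨hρ0, hρ1⟩ : ρ ∈ Set.Ioc 0 1 := hρ ▸ sum_mul_div_sum_mem_Ioc hc hb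
  set F : Ω → ℕ := fun ω ↦ ∑ k, (C k ω - 1)
  have hF : Measurable F := measurable_sum _ fun k _ ↦ (hmeas k).sub_const 1
  have hFlaw (f : ℕ) : μ {ω | F ω = f} = ENNReal.ofReal (negBinomialMass ρ (m + 1) f) := by
    simpa using hindep.measure_sum_sub_one_eq_negBinomialMass hmeas hρ0 hρ1 hgeom f
  set g : ℕ → ℝ := fun f ↦ (m + 1) / (f + (m + 1))
  have hg (f : ℕ) : |g f| ≤ 1 := by
    rw [abs_of_nonneg (by positivity), div_le_one (by positivity)]
    linarith [(Nat.cast_nonneg f : (0 : ℝ) ≤ f)]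
  have hae : (fun ω ↦ (((m + 2 : ℕ) : ℝ) - 1) / ((∑ k, (C k ω : ℝ)) - 1))
      =ᵐ[μ] fun ω ↦ g (F ω) := by
    filter_upwards [ae_all_iff.2 fun k ↦ ae_ne_zero_of_geometric (hmeas k) hρ0 hρ1 (hgeom k)]
      with ω hω
    rw [cast_sum_eq_cast_sum_sub_one_add_card _ fun k _ ↦ hω k, card_univ, Fintype.card_fin]
    simp only [g, F]
    push_cast
    ring_nf
  calc _ = (1 / ((m + 2 : ℕ) : ℝ) * ∑ k, c k) * ∫ ω, g (F ω) ∂μ := by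
        rw [integral_const_mul, integral_congr_ae hae]
    _ = (1 / ((m + 2 : ℕ) : ℝ) * ∑ k, c k) * ρ := by
        rw [integral_comp_eq_tsum hF hg]
        simp_rw [measureReal_def, hFlaw,
          ENNReal.toReal_ofReal (negBinomialMass_nonneg hρ0.le hρ1 _ _)]
        exact congrArg _ (hasSum_negBinomialMass_mul_div m hρ0 hρ1).tsum_eq
    _ = _ := by
        have hcsum : ∑ k, c k ≠ 0 := (sum_pos (fun k _ ↦ hc k) univ_nonempty).ne'
        rw [hρ]
        field_simp

/-- The Bernoulli race yields an unbiased estimator of the average weight: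
`E[((1/N) ∑ c k) · (N-1)/(∑ C k - 1)] = (1/N) ∑ c k * b k`. -/
theorem bernoulli_race_likelihood_unbiased {Ω : Type*} [MeasurableSpace Ω]
    (μ : Measure Ω) [IsProbabilityMeasure μ]
    (N : ℕ) (hN : 2 ≤ N) (c b : Fin N → ℝ)
    (hc : ∀ i, 0 < c i) (hb : ∀ i, b i ∈ Set.Ioc (0:ℝ) 1)
    (ρ : ℝ) (hρ : ρ = (∑ k, c k * b k) / ∑ k, c k)
    -- the output indices of the Bernoulli race
    (I : Fin N → Ω → Fin N) (hIm : ∀ k, Measurable (I k))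
    (hIdist : ∀ k i, μ {ω | I k ω = i}
      = ENNReal.ofReal (c i * b i / ∑ j, c j * b j))
    -- the i.i.d. geometric iteration counts with success probability ρ
    (C : Fin N → Ω → ℕ) (hmeas : ∀ k, Measurable (C k))
    (hindep : iIndepFun C μ)
    (hgeom : ∀ k, ∀ n : ℕ, 1 ≤ n →
      μ {ω | C k ω = n} = ENNReal.ofReal (ρ * (1 - ρ) ^ (n - 1))) :
    ∫ ω, ((1 / (N : ℝ)) * ∑ k, c k) * (((N : ℝ) - 1) / ((∑ k, (C k ω : ℝ)) - 1)) ∂μ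
      = (1 / (N : ℝ)) * ∑ k, c k * b k :=
  bernoulli_race_likelihood_unbiased_general μ N hN c b hc hb ρ hρ C hmeas hindep hgeom
end
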